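/- arXiv:1203.5040 — 4 statements merged into one kernel-verified Lean document; each statement's English description precedes it below -/
import Mathlib

section
/- In a preemptive M/G/1-LIFO queue, the relative value function with respect to arbitrary job-specific holding costs is v_z − v_0 = (1/(1−ρ)) Σ_{i=1}^n b_i Σ_{j=1}^i Δ_j, where jobs are indexed in service order (job 1 in service); consequently, since a new job preempts and is added at the front, the admission cost of a new job of size x with holding cost b is ω_z(x,b) = (1/(1−ρ))(b x + x Σ_{i=1}^n b_i). -/
/-- Sum `Σᵢ bᵢ · (acc + Σ_{j≤i} Δⱼ)` over a list of (remaining size, holding cost) pairs,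
jobs indexed in service order (head of list in service). -/
def costSum : ℝ → List (ℝ × ℝ) → ℝ
  | _, [] => 0
  | acc, (d, b) :: rest => b * (acc + d) + costSum (acc + d) rest

/-- The preemptive M/G/1-LIFO relative value function with job-specific holding costs:
`v_z − v_0 = (1/(1−ρ)) Σᵢ bᵢ Σ_{j≤i} Δⱼ` (job 1 in service). -/
noncomputable def lifoValue (ρ : ℝ) (z : List (ℝ × ℝ)) : ℝ :=
  (1 / (1 - ρ)) * costSum 0 z


lemma costSum_shift (t : ℝ) : ∀ (acc : ℝ) (z : List (ℝ × ℝ)),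
    costSum (acc + t) z = costSum acc z + t * (z.map Prod.snd).sum := by
  intro acc z
  induction z generalizing acc with
  | nil => simp [costSum]
  | cons hd tl ih =>
    obtain ⟨d, b⟩ := hd
    simp only [costSum, List.map_cons, List.sum_cons]
    have : acc + t + d = acc + d + t := by ring
    rw [this, ih]
    ring

/-- Admitting a new job of size `x` with holding cost rate `b` into a preemptive
M/G/1-LIFO queue in state `z` (the new job preempts, i.e. is placed first) costs
`ω_z(x,b) = (1/(1−ρ))(b·x + x·Σᵢ bᵢ)`. -/
theorem lifo_admission_cost (ρ x b : ℝ) (hρ : ρ < 1) (z : List (ℝ × ℝ)) :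
    lifoValue ρ ((x, b) :: z) - lifoValue ρ z
      = (1 / (1 - ρ)) * (b * x + x * (z.map Prod.snd).sum) := by
  simp only [lifoValue, costSum]
  rw [costSum_shift x 0 z]
  ring
end

section
/- In a preemptive M/G/1-LIFO queue, the slowdown-cost of admitting a job of size x into state z with jobs of initial sizes Δ*_1,…,Δ*_n is ω_z(x) = (1/(1−ρ))(1 + Σ_{i=1}^n x/Δ*_i), and this does not depend on the remaining sizes Δ_i. -/
theorem costSum_add_acc (l : List (ℝ × ℝ)) (a c : ℝ) :
    costSum (a + c) l = costSum a l + c * (l.map Prod.snd).sum := by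
  induction l generalizing a with
  | nil => simp [costSum]
  | cons job rest ih =>
    obtain ⟨d, b⟩ := job
    simp only [costSum, List.map_cons, List.sum_cons]
    rw [add_right_comm, ih]
    ring

theorem lifoValue_cons_sub (ρ d b : ℝ) (l : List (ℝ × ℝ)) :
    lifoValue ρ ((d, b) :: l) - lifoValue ρ l
      = (1 / (1 - ρ)) * (b * d + d * (l.map Prod.snd).sum) := by
  simp only [lifoValue, costSum, zero_add]
  rw [← zero_add d, costSum_add_acc, zero_add]
  ring

theorem lifo_slowdown_admission_cost_general (ρ x : ℝ) (hx : 0 < x)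
    {n : ℕ} (Δ Δstar : Fin n → ℝ) :
    lifoValue ρ ((x, x⁻¹) :: List.ofFn (fun i => (Δ i, (Δstar i)⁻¹)))
        - lifoValue ρ (List.ofFn (fun i => (Δ i, (Δstar i)⁻¹)))
      = (1 / (1 - ρ)) * (1 + ∑ i, x / Δstar i) := by
  have hcosts : ((List.ofFn fun i => (Δ i, (Δstar i)⁻¹)).map Prod.snd).sum
      = ∑ i, (Δstar i)⁻¹ := by
    rw [List.map_ofFn, List.sum_ofFn]
    rfl
  rw [lifoValue_cons_sub, hcosts, inv_mul_cancel₀ hx.ne', Finset.mul_sum]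
  simp only [div_eq_mul_inv]

/-- Slowdown-cost of admitting a job of size `x` (holding cost `1/x`) into a preemptive
M/G/1-LIFO queue whose jobs have remaining sizes `Δᵢ` and initial sizes `Δ*ᵢ`
(holding costs `1/Δ*ᵢ`): `ω_z(x) = (1/(1−ρ))(1 + Σᵢ x/Δ*ᵢ)`; in particular the cost
does not depend on the remaining sizes `Δᵢ`. -/
theorem lifo_slowdown_admission_cost (ρ x : ℝ) (hρ : ρ < 1) (hx : 0 < x)
    {n : ℕ} (Δ Δstar : Fin n → ℝ) (hΔstar : ∀ i, 0 < Δstar i) :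
    lifoValue ρ ((x, x⁻¹) :: List.ofFn (fun i => (Δ i, (Δstar i)⁻¹)))
        - lifoValue ρ (List.ofFn (fun i => (Δ i, (Δstar i)⁻¹)))
      = (1 / (1 - ρ)) * (1 + ∑ i, x / Δstar i) :=
  lifo_slowdown_admission_cost_general ρ x hx Δ Δstar
end

section
/- For m parallel preemptive-LIFO (or PS) servers with rates ν_1,…,ν_m and Bernoulli splitting probabilities p_i, the system mean slowdown is E[γ*] = (Σ_j ν_j)·Σ_{i=1}^m p_i/(ν_i − p_i λ E[Y]); minimizing over probability vectors (p_i ≥ 0, Σp_i = 1, p_i λE[Y] < ν_i) yields, when interior, p_i = (ν_i − √(ν_i)·G)/(λE[Y]) with G = (Σ_i ν_i − λE[Y])/(Σ_i √(ν_i)). -/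
/-!
With `G` as given, `νᵢ − c·pᵢ = √νᵢ·G`, so the marginal cost `νᵢ/(νᵢ − c·pᵢ)²` of server `i`
equals `1/G²` for every `i`; and `G` is exactly the constant that makes `Σ pᵢ = 1`.
-/

open Finset Real

theorem hasDerivAt_div_sub_mul {a c t : ℝ} (h : a - c * t ≠ 0) :
    HasDerivAt (fun s => s / (a - c * s)) (a / (a - c * t) ^ 2) t := by
  have hden : HasDerivAt (fun s => a - c * s) (-c) t := by
    simpa using ((hasDerivAt_id t).const_mul c).const_sub a
  exact ((hasDerivAt_id' t).div hden h).congr_deriv (by ring)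

theorem sum_sub_mul_div_eq_one {ι : Type*} (s : Finset ι) (ν w : ι → ℝ) {c : ℝ} (hc : c ≠ 0)
    (hw : ∑ i ∈ s, w i ≠ 0) :
    ∑ i ∈ s, (ν i - w i * ((∑ j ∈ s, ν j - c) / ∑ j ∈ s, w j)) / c = 1 := by
  rw [← sum_div, sum_sub_distrib, ← sum_mul, mul_div_cancel₀ _ hw, sub_sub_cancel,
    div_self hc]

/-- RND-opt for parallel preemptive-LIFO/PS servers: with `c = λE[Y] > 0`,
`G = (Σνᵢ − c)/(Σ√νᵢ)` and `pᵢ = (νᵢ − √νᵢ·G)/c` all interior (`0 < pᵢ`, `c·pᵢ < νᵢ`),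
the `pᵢ` form a probability distribution and are a stationary point of
`Σᵢ pᵢ/(νᵢ − c·pᵢ)` subject to `Σpᵢ = 1`: all partial derivatives are equal. -/
theorem rnd_opt_stationary
    (m : ℕ) (hm : 0 < m) (ν : Fin m → ℝ) (hν : ∀ i, 0 < ν i)
    (c : ℝ) (hc : 0 < c) (G : ℝ)
    (hG : G = ((∑ i, ν i) - c) / (∑ i, Real.sqrt (ν i)))
    (p : Fin m → ℝ)
    (hp : ∀ i, p i = (ν i - Real.sqrt (ν i) * G) / c)
    (hint : ∀ i, 0 < p i ∧ c * p i < ν i) :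
    (∑ i, p i) = 1 ∧ ∃ η : ℝ, ∀ i, HasDerivAt (fun t => t / (ν i - c * t)) η (p i) := by
  refine ⟨?_, (G ^ 2)⁻¹, fun i => ?_⟩
  · have hS : ∑ i, √(ν i) ≠ 0 :=
      (sum_pos (fun i _ => sqrt_pos.2 (hν i)) (univ_nonempty_iff.2 ⟨⟨0, hm⟩⟩)).ne'
    simp only [hp, hG]
    exact sum_sub_mul_div_eq_one _ _ _ hc.ne' hS
  · have hgap : ν i - c * p i = √(ν i) * G := by
      rw [hp i, mul_div_cancel₀ _ hc.ne', sub_sub_cancel]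
    have h := hasDerivAt_div_sub_mul (sub_pos.2 (hint i).2).ne'
    rwa [hgap, mul_pow, sq_sqrt (hν i).le, div_mul_cancel_left₀ (hν i).ne'] at h
end

section
/- For SITA-E thresholds over a continuous job size distribution with 0 = ξ_0 < ξ_1 < … < ξ_m = ∞ balancing load, the per-queue quantities λ_i E[1/X_i] are strictly decreasing in i: if X_i denotes the job size conditioned on (ξ_{i−1}, ξ_i], then λ_i E[1/X_i] > λ_{i+1} E[1/X_{i+1}], where λ_i = λP(X ∈ (ξ_{i−1}, ξ_i]). -/
/-!
On `(a, b]` we have `1 / x ≥ x / b²` and on `[b, c)` the reverse, strictly away from `b`.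
Weighting by the positive density `f`, both sides of the claim are compared with the
common value `∫ₐᵇ x f(x) dx / b² = ∫ᵇᶜ x f(x) dx / b²` given by the equal-load condition.
-/

open Set intervalIntegral

lemma div_sq_le_inv_iff {x b : ℝ} (hx : 0 < x) (hb : 0 < b) : x / b ^ 2 ≤ x⁻¹ ↔ x ≤ b := by
  rw [div_le_iff₀ (by positivity), ← div_eq_inv_mul, le_div_iff₀ hx, ← sq,
    pow_le_pow_iff_left₀ hx.le hb.le two_ne_zero]

lemma div_sq_lt_inv_iff {x b : ℝ} (hx : 0 < x) (hb : 0 < b) : x / b ^ 2 < x⁻¹ ↔ x < b := by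
  rw [div_lt_iff₀ (by positivity), ← div_eq_inv_mul, lt_div_iff₀ hx, ← sq,
    pow_lt_pow_iff_left₀ hx.le hb.le two_ne_zero]

lemma inv_le_div_sq_iff {x b : ℝ} (hx : 0 < x) (hb : 0 < b) : x⁻¹ ≤ x / b ^ 2 ↔ b ≤ x := by
  simpa only [not_lt] using (div_sq_lt_inv_iff hx hb).not

lemma inv_lt_div_sq_iff {x b : ℝ} (hx : 0 < x) (hb : 0 < b) : x⁻¹ < x / b ^ 2 ↔ b < x := by
  simpa only [not_le] using (div_sq_le_inv_iff hx hb).not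

theorem integral_mul_lt_integral_mul_of_nonneg {f g h : ℝ → ℝ} {a b : ℝ} (hab : a < b)
    (hf : ContinuousOn f (Icc a b)) (hg : ContinuousOn g (Icc a b))
    (hh : ContinuousOn h (Icc a b)) (hf₀ : ∀ x ∈ Icc a b, 0 ≤ f x)
    (hle : ∀ x ∈ Icc a b, g x ≤ h x) (hlt : ∃ c ∈ Icc a b, 0 < f c ∧ g c < h c) :
    ∫ x in a..b, f x * g x < ∫ x in a..b, f x * h x := by
  obtain ⟨c, hc, hfc, hghc⟩ := hlt
  exact integral_lt_integral_of_continuousOn_of_le_of_exists_lt hab (hf.mul hg) (hf.mul hh)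
    (fun x hx ↦ mul_le_mul_of_nonneg_left (hle x (Ioc_subset_Icc_self hx))
      (hf₀ x (Ioc_subset_Icc_self hx)))
    ⟨c, hc, mul_lt_mul_of_pos_left hghc hfc⟩

/-- SITA-E monotonicity: if two consecutive size intervals `(a,b]` and `(b,c]` with
`0 < a < b < c` carry equal load, i.e. `∫ₐᵇ x f(x) dx = ∫ᵇᶜ x f(x) dx` for a positive
continuous job-size density `f`, then `λᵢE[1/Xᵢ]` strictly decreases:
`∫ₐᵇ f(x)/x dx > ∫ᵇᶜ f(x)/x dx`. -/
theorem sita_e_inverse_moment_decreasing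
    (f : ℝ → ℝ) (a b c : ℝ)
    (ha : 0 < a) (hab : a < b) (hbc : b < c)
    (hf : ContinuousOn f (Set.Icc a c))
    (hfpos : ∀ x ∈ Set.Icc a c, 0 < f x)
    (hload : ∫ x in a..b, x * f x = ∫ x in b..c, x * f x) :
    ∫ x in b..c, f x / x < ∫ x in a..b, f x / x := by
  have hb : 0 < b := ha.trans hab
  have hIcc_ab : Icc a b ⊆ Icc a c := Icc_subset_Icc_right hbc.le
  have hIcc_bc : Icc b c ⊆ Icc a c := Icc_subset_Icc_left hab.le
  have hinv : ContinuousOn (·⁻¹) (Icc a c) :=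
    continuousOn_inv₀.mono fun x hx ↦ (ha.trans_le hx.1).ne'
  have hdiv : ContinuousOn (· / b ^ 2) (Icc a c) := continuousOn_id.div_const _
  have lower : ∫ x in a..b, f x * (x / b ^ 2) < ∫ x in a..b, f x * x⁻¹ :=
    integral_mul_lt_integral_mul_of_nonneg hab (hf.mono hIcc_ab) (hdiv.mono hIcc_ab)
      (hinv.mono hIcc_ab) (fun x hx ↦ (hfpos x (hIcc_ab hx)).le)
      (fun x hx ↦ (div_sq_le_inv_iff (ha.trans_le hx.1) hb).2 hx.2)
      ⟨a, left_mem_Icc.2 hab.le, hfpos a (hIcc_ab (left_mem_Icc.2 hab.le)),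
        (div_sq_lt_inv_iff ha hb).2 hab⟩
  have upper : ∫ x in b..c, f x * x⁻¹ < ∫ x in b..c, f x * (x / b ^ 2) :=
    integral_mul_lt_integral_mul_of_nonneg hbc (hf.mono hIcc_bc) (hinv.mono hIcc_bc)
      (hdiv.mono hIcc_bc) (fun x hx ↦ (hfpos x (hIcc_bc hx)).le)
      (fun x hx ↦ (inv_le_div_sq_iff (hb.trans_le hx.1) hb).2 hx.1)
      ⟨c, right_mem_Icc.2 hbc.le, hfpos c (hIcc_bc (right_mem_Icc.2 hbc.le)),
        (inv_lt_div_sq_iff (hb.trans hbc) hb).2 hbc⟩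
  have load_div (u v : ℝ) : ∫ x in u..v, f x * (x / b ^ 2) = (∫ x in u..v, x * f x) / b ^ 2 := by
    rw [← integral_div]
    exact integral_congr fun x _ ↦ by ring
  simp only [div_eq_mul_inv (f _)]
  rw [load_div, hload, ← load_div] at lower
  exact upper.trans lower
end
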